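/- arXiv:1103.0377 — 7 statements merged into one kernel-verified Lean document; each statement's English description precedes it below -/
import Mathlib

section
/- With the same setup, the quantity ℒ_{q_T} := ln Z_T + Σ_{R∈ℛ\ℛ_T} Σ_x q_T(x) ln α_R(x_R) is a lower bound on the log partition function: ℒ_{q_T} ≤ ln Z. -/
open Finset Real

/-! Write `∏_{R} α_R = p · w` with `p = ∏_{R ∈ ℛ_T} α_R` and `w = ∏_{R ∉ ℛ_T} α_R`, so that
`q_T = p / Z_T` and `Z = Σ_x p(x) w(x) = Z_T · E_{q_T}[w]`. The double sum in `ℒ_{q_T}` is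
`E_{q_T}[ln w]`, and Jensen's inequality for the concave logarithm gives
`E_{q_T}[ln w] ≤ ln E_{q_T}[w] = ln Z - ln Z_T`. -/

theorem Real.sum_mul_log_le_log_sum_mul {ι : Type*} {s : Finset ι} {q w : ι → ℝ}
    (hq : ∀ i ∈ s, 0 ≤ q i) (hq₁ : ∑ i ∈ s, q i = 1) (hw : ∀ i ∈ s, 0 < w i) :
    ∑ i ∈ s, q i * log (w i) ≤ log (∑ i ∈ s, q i * w i) := by
  simpa only [smul_eq_mul] using
    strictConcaveOn_log_Ioi.concaveOn.le_map_sum hq hq₁ fun i hi => Set.mem_Ioi.mpr (hw i hi)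

theorem Real.log_sum_add_sum_div_mul_log_le {ι : Type*} {s : Finset ι} (hs : s.Nonempty)
    {p w : ι → ℝ} (hp : ∀ i ∈ s, 0 < p i) (hw : ∀ i ∈ s, 0 < w i) :
    log (∑ i ∈ s, p i) + ∑ i ∈ s, p i / (∑ j ∈ s, p j) * log (w i)
      ≤ log (∑ i ∈ s, p i * w i) := by
  set P := ∑ j ∈ s, p j
  have hP : 0 < P := sum_pos hp hs
  have hpw : 0 < ∑ i ∈ s, p i * w i := sum_pos (fun i hi => mul_pos (hp i hi) (hw i hi)) hs
  have jensen := sum_mul_log_le_log_sum_mul (fun i hi => (div_pos (hp i hi) hP).le)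
    (by rw [← sum_div, div_self hP.ne']) hw
  have hmean : ∑ i ∈ s, p i / P * w i = (∑ i ∈ s, p i * w i) / P := by
    rw [sum_div]; exact sum_congr rfl fun i _ => div_mul_eq_mul_div _ _ _
  rw [hmean, log_div hpw.ne' hP.ne'] at jensen
  linarith

/-- `ℒ_{q_T} = ln Z_T + Σ_{R∉T} Σ_x q_T(x) ln α_R(x)` is a lower bound
on the log partition function `ln Z`. -/
theorem subtree_lower_bound {X : Type*} [Fintype X] [Nonempty X]
    {R : Type*} [Fintype R] [DecidableEq R] (α : R → X → ℝ) (hα : ∀ r x, 0 < α r x)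
    (T : Finset R) (Z ZT : ℝ) (qT : X → ℝ)
    (hZ : Z = ∑ x, ∏ r, α r x)
    (hZT : ZT = ∑ x, ∏ r ∈ T, α r x)
    (hq : ∀ x, qT x = (∏ r ∈ T, α r x) / ZT) :
    Real.log ZT + ∑ r ∈ Tᶜ, ∑ x, qT x * Real.log (α r x) ≤ Real.log Z := by
  have hprod_pos (S : Finset R) (x : X) : 0 < ∏ r ∈ S, α r x := prod_pos fun r _ => hα r x
  have hcross : ∑ r ∈ Tᶜ, ∑ x, qT x * log (α r x)
      = ∑ x, (∏ r ∈ T, α r x) / ZT * log (∏ r ∈ Tᶜ, α r x) := by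
    rw [sum_comm]
    refine sum_congr rfl fun x _ => ?_
    rw [← mul_sum, hq, log_prod fun r _ => (hα r x).ne']
  calc log ZT + ∑ r ∈ Tᶜ, ∑ x, qT x * log (α r x)
      ≤ log (∑ x, (∏ r ∈ T, α r x) * ∏ r ∈ Tᶜ, α r x) := by
        rw [hcross, hZT]
        exact log_sum_add_sum_div_mul_log_le univ_nonempty
          (fun x _ => hprod_pos T x) (fun x _ => hprod_pos Tᶜ x)
    _ = log Z := by simp only [prod_mul_prod_compl, hZ]
end

section
/- Let q1, q2 be strictly positive probability distributions on a finite set X and p(x) = c·q1(x)·q2(x) a probability distribution. Suppose H(q1) ≤ H(q2) (q1 has minimum entropy) and D(q2‖p) ≤ D(q1‖p) (q2 gives the better lower bound on ln Z). Then D(q2‖q1) ≤ D(q1‖q2). -/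
open Finset Real

/-- Corollary 3: if `H(q1) ≤ H(q2)` and `q2` gives the better lower
bound (`D(q2‖p) ≤ D(q1‖p)` with `p = c·q1·q2`), then `D(q2‖q1) ≤ D(q1‖q2)`. -/
theorem best_bound_close_to_min_entropy {X : Type*} [Fintype X] [Nonempty X]
    (q1 q2 p : X → ℝ) (c : ℝ) (hc : 0 < c)
    (hq1 : ∀ x, 0 < q1 x) (hq2 : ∀ x, 0 < q2 x)
    (hq1s : ∑ x, q1 x = 1) (hq2s : ∑ x, q2 x = 1)
    (hp : ∀ x, p x = c * q1 x * q2 x) (hps : ∑ x, p x = 1)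
    (hH : (-∑ x, q1 x * Real.log (q1 x)) ≤ -∑ x, q2 x * Real.log (q2 x))
    (hB : (∑ x, q2 x * Real.log (q2 x / p x)) ≤ ∑ x, q1 x * Real.log (q1 x / p x)) :
    (∑ x, q2 x * Real.log (q2 x / q1 x)) ≤ ∑ x, q1 x * Real.log (q1 x / q2 x) := by
  have e1 : ∑ x, q2 x * Real.log (q2 x / p x)
      = ∑ x, (q2 x * (-Real.log c) - q2 x * Real.log (q1 x)) := by
    refine Finset.sum_congr rfl fun x _ => ?_
    rw [hp, Real.log_div (hq2 x).ne' (mul_pos (mul_pos hc (hq1 x)) (hq2 x)).ne',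
      Real.log_mul (mul_pos hc (hq1 x)).ne' (hq2 x).ne',
      Real.log_mul hc.ne' (hq1 x).ne']
    ring
  have e2 : ∑ x, q1 x * Real.log (q1 x / p x)
      = ∑ x, (q1 x * (-Real.log c) - q1 x * Real.log (q2 x)) := by
    refine Finset.sum_congr rfl fun x _ => ?_
    rw [hp, Real.log_div (hq1 x).ne' (mul_pos (mul_pos hc (hq1 x)) (hq2 x)).ne',
      Real.log_mul (mul_pos hc (hq1 x)).ne' (hq2 x).ne',
      Real.log_mul hc.ne' (hq1 x).ne']
    ring
  rw [e1, e2, Finset.sum_sub_distrib, Finset.sum_sub_distrib,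
    ← Finset.sum_mul, ← Finset.sum_mul, hq1s, hq2s] at hB
  have e3 : ∑ x, q2 x * Real.log (q2 x / q1 x)
      = ∑ x, q2 x * Real.log (q2 x) - ∑ x, q2 x * Real.log (q1 x) := by
    rw [← Finset.sum_sub_distrib]
    refine Finset.sum_congr rfl fun x _ => ?_
    rw [Real.log_div (hq2 x).ne' (hq1 x).ne']; ring
  have e4 : ∑ x, q1 x * Real.log (q1 x / q2 x)
      = ∑ x, q1 x * Real.log (q1 x) - ∑ x, q1 x * Real.log (q2 x) := by
    rw [← Finset.sum_sub_distrib]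
    refine Finset.sum_congr rfl fun x _ => ?_
    rw [Real.log_div (hq1 x).ne' (hq2 x).ne']; ring
  rw [e3, e4]
  linarith
end

section
/- For any probability distributions q1, q2, p on a finite set X with q2 and p strictly positive: D(q1‖p) ≤ D(q1‖q2) + D(q2‖p) + D(q2‖q1). More specifically, in the setting p = c·q1·q2 with q1, q2 strictly positive pmfs, the inequality D(q1‖p) ≤ D(q1‖q2) + D(q2‖p) holds whenever H(q1) ≤ H(q2). -/
open Finset Real

lemma kl_nonneg' {X : Type*} [Fintype X] (a b : X → ℝ)
    (ha : ∀ x, 0 < a x) (hb : ∀ x, 0 < b x)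
    (has : ∑ x, a x = 1) (hbs : ∑ x, b x = 1) :
    0 ≤ ∑ x, a x * Real.log (a x / b x) := by
  have h : ∑ x, a x * Real.log (b x / a x) ≤ 0 := by
    have := fun x : X => Real.log_le_sub_one_of_pos (div_pos (hb x) (ha x))
    calc ∑ x, a x * Real.log (b x / a x) ≤ ∑ x, a x * (b x / a x - 1) := by
          apply Finset.sum_le_sum
          intro x _
          exact mul_le_mul_of_nonneg_left (this x) (ha x).le
      _ = ∑ x, (b x - a x) := by
          apply Finset.sum_congr rfl
          intro x _
          rw [mul_sub, mul_div_cancel₀ _ (ha x).ne', mul_one]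
      _ = 0 := by rw [Finset.sum_sub_distrib, has, hbs]; ring
  have : ∑ x, a x * Real.log (a x / b x) = -∑ x, a x * Real.log (b x / a x) := by
    rw [← Finset.sum_neg_distrib]
    apply Finset.sum_congr rfl
    intro x _
    rw [show a x / b x = (b x / a x)⁻¹ by rw [inv_div], Real.log_inv]
    ring
  rw [this]; linarith

/-- inequality (12): in the setting `p = c·q1·q2` with `H(q1) ≤ H(q2)`,
`D(q1‖p) ≤ D(q1‖q2) + D(q2‖p)`; a fortiori
`D(q1‖p) ≤ D(q1‖q2) + D(q2‖p) + D(q2‖q1)`. -/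
theorem triangle_type_ineq {X : Type*} [Fintype X] [Nonempty X]
    (q1 q2 p : X → ℝ) (c : ℝ) (hc : 0 < c)
    (hq1 : ∀ x, 0 < q1 x) (hq2 : ∀ x, 0 < q2 x)
    (hq1s : ∑ x, q1 x = 1) (hq2s : ∑ x, q2 x = 1)
    (hp : ∀ x, p x = c * q1 x * q2 x) (hps : ∑ x, p x = 1)
    (hH : (-∑ x, q1 x * Real.log (q1 x)) ≤ -∑ x, q2 x * Real.log (q2 x)) :
    (∑ x, q1 x * Real.log (q1 x / p x))
      ≤ (∑ x, q1 x * Real.log (q1 x / q2 x)) + ∑ x, q2 x * Real.log (q2 x / p x)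
    ∧ (∑ x, q1 x * Real.log (q1 x / p x))
      ≤ (∑ x, q1 x * Real.log (q1 x / q2 x)) + (∑ x, q2 x * Real.log (q2 x / p x))
        + ∑ x, q2 x * Real.log (q2 x / q1 x) := by
  set A := ∑ x, q1 x * Real.log (q1 x) with hA
  set B := ∑ x, q2 x * Real.log (q2 x) with hB
  set C1 := ∑ x, q1 x * Real.log (q2 x) with hC1
  set C2 := ∑ x, q2 x * Real.log (q1 x) with hC2
  have hlog : ∀ x, Real.log (p x) = Real.log c + Real.log (q1 x) + Real.log (q2 x) := by
    intro x
    rw [hp x, Real.log_mul (mul_pos hc (hq1 x)).ne' (hq2 x).ne', Real.log_mul hc.ne' (hq1 x).ne']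
  have e1 : ∑ x, q1 x * Real.log (q1 x / p x) = -Real.log c - C1 := by
    have : ∀ x, q1 x * Real.log (q1 x / p x)
        = q1 x * (-Real.log c) - q1 x * Real.log (q2 x) := by
      intro x
      rw [Real.log_div (hq1 x).ne' (by rw [hp x]; exact (mul_pos (mul_pos hc (hq1 x)) (hq2 x)).ne'), hlog x]; ring
    rw [Finset.sum_congr rfl (fun x _ => this x), Finset.sum_sub_distrib,
      ← Finset.sum_mul, hq1s]
    ring
  have e12 : ∑ x, q1 x * Real.log (q1 x / q2 x) = A - C1 := by
    rw [hA, hC1, ← Finset.sum_sub_distrib]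
    apply Finset.sum_congr rfl
    intro x _
    rw [Real.log_div (hq1 x).ne' (hq2 x).ne']; ring
  have e2 : ∑ x, q2 x * Real.log (q2 x / p x) = -Real.log c - C2 := by
    have : ∀ x, q2 x * Real.log (q2 x / p x)
        = q2 x * (-Real.log c) - q2 x * Real.log (q1 x) := by
      intro x
      rw [Real.log_div (hq2 x).ne' (by rw [hp x]; exact (mul_pos (mul_pos hc (hq1 x)) (hq2 x)).ne'), hlog x]; ring
    rw [Finset.sum_congr rfl (fun x _ => this x), Finset.sum_sub_distrib,
      ← Finset.sum_mul, hq2s]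
    ring
  have e21 : ∑ x, q2 x * Real.log (q2 x / q1 x) = B - C2 := by
    rw [hB, hC2, ← Finset.sum_sub_distrib]
    apply Finset.sum_congr rfl
    intro x _
    rw [Real.log_div (hq2 x).ne' (hq1 x).ne']; ring
  have hkl : 0 ≤ ∑ x, q2 x * Real.log (q2 x / q1 x) :=
    kl_nonneg' q2 q1 hq2 hq1 hq2s hq1s
  rw [e21] at hkl
  constructor
  · rw [e1, e12, e2]; linarith
  · rw [e1, e12, e2, e21]; linarith
end

section
/- Theorem 2 (two general sub-collections, first bound). Let α_R, R ∈ ℛ, be strictly positive kernels on a finite set X, and ℛ_1, ℛ_2 ⊆ ℛ. Let q_i be the normalized product over ℛ_i and q̄_i the normalized product over ℛ\ℛ_i (i = 1,2), and ℒ_{q_i} = ln Z_i + Σ_{R∈ℛ\ℛ_i} Σ_x q_i(x) ln α_R(x). If H(q_1) ≤ H(q_2), then ℒ_{q_2} ≤ ℒ_{q_1} + D(q_1‖q̄_1) − D(q_2‖q_1). -/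
/-!
Writing `A = Σ_{R ∈ ℛ} ln α_R`, one has `ℒ_{q_i} = E_{q_i}[A] + H(q_i)`, and
`ln q_1 + ln q̄_1 = A − ln Z_1 − ln Z_{ℛ∖ℛ_1}` pointwise. Substituting both, the right-hand side
minus the left-hand side collapses to `H(q_2) − H(q_1) + D(q_2‖q̄_1)`, which is nonnegative by the
hypothesis and Gibbs' inequality.
-/

open Finset Real

section Entropy

variable {X : Type*} [Fintype X]

theorem sum_mul_log_div_eq_sub {p q : X → ℝ} (hq : ∀ x, q x ≠ 0) :
    ∑ x, p x * log (p x / q x) = ∑ x, p x * log (p x) - ∑ x, p x * log (q x) := by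
  rw [← sum_sub_distrib]
  refine sum_congr rfl fun x _ => ?_
  rcases eq_or_ne (p x) 0 with hp | hp
  · simp [hp]
  · rw [log_div hp (hq x), mul_sub]

theorem sum_mul_log_le_sum_mul_log {p q : X → ℝ} (hp : ∀ x, 0 < p x) (hq : ∀ x, 0 < q x)
    (hsum : ∑ x, q x ≤ ∑ x, p x) :
    ∑ x, p x * log (q x) ≤ ∑ x, p x * log (p x) := by
  rw [← sub_nonpos, ← sum_sub_distrib]
  calc ∑ x, (p x * log (q x) - p x * log (p x))
      = ∑ x, p x * log (q x / p x) :=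
        sum_congr rfl fun x _ => by rw [log_div (hq x).ne' (hp x).ne', mul_sub]
    _ ≤ ∑ x, p x * (q x / p x - 1) :=
        sum_le_sum fun x _ => mul_le_mul_of_nonneg_left
          (log_le_sub_one_of_pos (div_pos (hq x) (hp x))) (hp x).le
    _ = ∑ x, q x - ∑ x, p x := by
        rw [← sum_sub_distrib]
        refine sum_congr rfl fun x _ => ?_
        field_simp [(hp x).ne']
    _ ≤ 0 := sub_nonpos.2 hsum

end Entropy

noncomputable section ProductDistribution

variable {X ι : Type*} [Fintype X]

def partitionFunction (α : ι → X → ℝ) (T : Finset ι) : ℝ :=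
  ∑ x, ∏ r ∈ T, α r x

def productDistribution (α : ι → X → ℝ) (T : Finset ι) (x : X) : ℝ :=
  (∏ r ∈ T, α r x) / partitionFunction α T

/-- The paper's `ℒ_{q_T}`, a lower bound for `ln Z_ℛ`. -/
def elbo [Fintype ι] [DecidableEq ι] (α : ι → X → ℝ) (T : Finset ι) : ℝ :=
  log (partitionFunction α T) + ∑ r ∈ Tᶜ, ∑ x, productDistribution α T x * log (α r x)

variable [Nonempty X] (α : ι → X → ℝ) (hα : ∀ r x, 0 < α r x) (T : Finset ι)
include hα

theorem partitionFunction_pos : 0 < partitionFunction α T :=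
  sum_pos (fun x _ => prod_pos fun r _ => hα r x) univ_nonempty

theorem productDistribution_pos (x : X) : 0 < productDistribution α T x :=
  div_pos (prod_pos fun r _ => hα r x) (partitionFunction_pos α hα T)

theorem sum_productDistribution : ∑ x, productDistribution α T x = 1 := by
  simp only [productDistribution, ← sum_div]
  exact div_self (partitionFunction_pos α hα T).ne'

theorem log_productDistribution (x : X) :
    log (productDistribution α T x) = ∑ r ∈ T, log (α r x) - log (partitionFunction α T) := by
  rw [productDistribution, log_div (prod_pos fun r _ => hα r x).ne'
    (partitionFunction_pos α hα T).ne', log_prod fun r _ => (hα r x).ne']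

variable [Fintype ι] [DecidableEq ι]

theorem sum_mul_log_productDistribution_add_compl {p : X → ℝ} (hp : ∑ x, p x = 1) :
    ∑ x, p x * log (productDistribution α T x) + ∑ x, p x * log (productDistribution α Tᶜ x)
      = ∑ x, p x * ∑ r, log (α r x)
        - (log (partitionFunction α T) + log (partitionFunction α Tᶜ)) := by
  have hpoint (x : X) : log (productDistribution α T x) + log (productDistribution α Tᶜ x)
      = ∑ r, log (α r x) - (log (partitionFunction α T) + log (partitionFunction α Tᶜ)) := by
    rw [log_productDistribution α hα, log_productDistribution α hα,
      ← sum_add_sum_compl T fun r => log (α r x)]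
    ring
  simp only [← sum_add_distrib, ← mul_add, hpoint, mul_sub, sum_sub_distrib, ← sum_mul, hp,
    one_mul]

theorem elbo_eq : elbo α T = ∑ x, productDistribution α T x * ∑ r, log (α r x)
    - ∑ x, productDistribution α T x * log (productDistribution α T x) := by
  have hpoint (x : X) : ∑ r ∈ Tᶜ, productDistribution α T x * log (α r x)
      = productDistribution α T x * ∑ r, log (α r x)
        - productDistribution α T x * log (productDistribution α T x)
        - productDistribution α T x * log (partitionFunction α T) := by
    rw [← mul_sum, log_productDistribution α hα, ← sum_add_sum_compl T fun r => log (α r x)]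
    ring
  rw [elbo, sum_comm]
  simp only [hpoint, sum_sub_distrib, ← sum_mul, sum_productDistribution α hα, one_mul]
  ring

end ProductDistribution

/-- Theorem 2, first bound: if `H(q1) ≤ H(q2)` then
`ℒ_{q2} ≤ ℒ_{q1} + D(q1‖q̄1) − D(q2‖q1)`. -/
theorem theorem2_first_bound {X : Type*} [Fintype X] [Nonempty X]
    {R : Type*} [Fintype R] [DecidableEq R] (α : R → X → ℝ) (hα : ∀ r x, 0 < α r x)
    (T1 T2 : Finset R) (Z1 Z2 Z1bar : ℝ) (q1 q2 q1bar : X → ℝ)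
    (hZ1 : Z1 = ∑ x, ∏ r ∈ T1, α r x)
    (hZ2 : Z2 = ∑ x, ∏ r ∈ T2, α r x)
    (hZ1bar : Z1bar = ∑ x, ∏ r ∈ T1ᶜ, α r x)
    (hq1 : ∀ x, q1 x = (∏ r ∈ T1, α r x) / Z1)
    (hq2 : ∀ x, q2 x = (∏ r ∈ T2, α r x) / Z2)
    (hq1bar : ∀ x, q1bar x = (∏ r ∈ T1ᶜ, α r x) / Z1bar)
    (hH : (-∑ x, q1 x * Real.log (q1 x)) ≤ -∑ x, q2 x * Real.log (q2 x)) :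
    Real.log Z2 + ∑ r ∈ T2ᶜ, ∑ x, q2 x * Real.log (α r x)
      ≤ (Real.log Z1 + ∑ r ∈ T1ᶜ, ∑ x, q1 x * Real.log (α r x))
        + (∑ x, q1 x * Real.log (q1 x / q1bar x))
        - ∑ x, q2 x * Real.log (q2 x / q1 x) := by
  subst hZ1 hZ2 hZ1bar
  obtain rfl : q1 = productDistribution α T1 := funext hq1
  obtain rfl : q2 = productDistribution α T2 := funext hq2
  obtain rfl : q1bar = productDistribution α T1ᶜ := funext hq1bar
  change elbo α T2 ≤ elbo α T1 + _ - _
  have hpos := productDistribution_pos α hα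
  have hsum := sum_productDistribution α hα
  rw [elbo_eq α hα, elbo_eq α hα, sum_mul_log_div_eq_sub fun x => (hpos T1ᶜ x).ne',
    sum_mul_log_div_eq_sub fun x => (hpos T1 x).ne']
  have hsplit1 := sum_mul_log_productDistribution_add_compl α hα T1 (hsum T1)
  have hsplit2 := sum_mul_log_productDistribution_add_compl α hα T1 (hsum T2)
  have hgibbs : ∑ x, productDistribution α T2 x * log (productDistribution α T1ᶜ x)
      ≤ ∑ x, productDistribution α T2 x * log (productDistribution α T2 x) :=
    sum_mul_log_le_sum_mul_log (hpos T2) (hpos T1ᶜ) (by rw [hsum, hsum])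
  linarith
end

section
/- Corollary 2 (quality guarantee of the minimum-entropy sub-tree). In the setting of Theorem 2, suppose q_S (over ℛ_S ⊆ ℛ) satisfies H(q_S) ≤ H(q_T) for a given ℛ_T ⊆ ℛ with distribution q_T. Then ℒ_{q_T} ≤ ℒ_{q_S} + D(q_S‖q̄_S), where q̄_S is the normalized product over ℛ\ℛ_S; in particular no other sub-collection's lower bound can exceed that of q_S by more than D(q_S‖q̄_S). -/
open Finset Real

/-!
For every sub-collection `T`, `ℒ_{q_T} = E_{q_T}[log ∏_ℛ α] + H(q_T)`, and the full product
factors as `∏_ℛ α = Z_S Z_{S̄} q_S q̄_S`. Gibbs' inequality bounds both `E_{q_T}[log q_S]` and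
`E_{q_T}[log q̄_S]` by `-H(q_T)`, so `ℒ_{q_T} ≤ log Z_S + log Z_{S̄} - H(q_T)`, while the same two
identities give `ℒ_{q_S} + D(q_S‖q̄_S) = log Z_S + log Z_{S̄} - H(q_S)`. The entropy hypothesis
closes the gap.
-/

namespace FactorGibbs

variable {X ι : Type*} [Fintype X]

theorem sum_mul_log_le_sum_mul_log {p q : X → ℝ} (hp : ∀ x, 0 < p x) (hq : ∀ x, 0 < q x)
    (hsum : ∑ x, q x ≤ ∑ x, p x) :
    ∑ x, p x * log (q x) ≤ ∑ x, p x * log (p x) := by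
  have pointwise (x : X) : p x * log (q x) - p x * log (p x) ≤ q x - p x :=
    calc p x * log (q x) - p x * log (p x) = p x * log (q x / p x) := by
          rw [log_div (hq x).ne' (hp x).ne']; ring
      _ ≤ p x * (q x / p x - 1) :=
          mul_le_mul_of_nonneg_left (log_le_sub_one_of_pos (div_pos (hq x) (hp x))) (hp x).le
      _ = q x - p x := by rw [mul_sub, mul_div_cancel₀ _ (hp x).ne', mul_one]
  have := sum_le_sum fun x (_ : x ∈ univ) => pointwise x
  simp only [sum_sub_distrib] at this
  linarith

noncomputable def entropy (q : X → ℝ) : ℝ := -∑ x, q x * log (q x)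

noncomputable def relEntropy (p q : X → ℝ) : ℝ := ∑ x, p x * log (p x / q x)

theorem relEntropy_eq_sub {p q : X → ℝ} (hp : ∀ x, 0 < p x) (hq : ∀ x, 0 < q x) :
    relEntropy p q = ∑ x, p x * log (p x) - ∑ x, p x * log (q x) := by
  simp only [relEntropy, log_div (hp _).ne' (hq _).ne', mul_sub, sum_sub_distrib]

variable (α : ι → X → ℝ)

noncomputable def partitionFn (S : Finset ι) : ℝ := ∑ x, ∏ r ∈ S, α r x

noncomputable def gibbsDist (S : Finset ι) (x : X) : ℝ := (∏ r ∈ S, α r x) / partitionFn α S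

noncomputable def lowerBound [Fintype ι] [DecidableEq ι] (S : Finset ι) : ℝ :=
  log (partitionFn α S) + ∑ r ∈ Sᶜ, ∑ x, gibbsDist α S x * log (α r x)

variable {α}

theorem partitionFn_pos [Nonempty X] (hα : ∀ r x, 0 < α r x) (S : Finset ι) :
    0 < partitionFn α S :=
  sum_pos (fun x _ => prod_pos fun r _ => hα r x) univ_nonempty

theorem gibbsDist_pos (hα : ∀ r x, 0 < α r x) (S : Finset ι) (x : X) : 0 < gibbsDist α S x :=
  have : Nonempty X := ⟨x⟩
  div_pos (prod_pos fun r _ => hα r x) (partitionFn_pos hα S)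

theorem sum_gibbsDist [Nonempty X] (hα : ∀ r x, 0 < α r x) (S : Finset ι) :
    ∑ x, gibbsDist α S x = 1 := by
  unfold gibbsDist
  rw [← sum_div]
  exact div_self (partitionFn_pos hα S).ne'

theorem log_prod_eq (hα : ∀ r x, 0 < α r x) (S : Finset ι) (x : X) :
    log (∏ r ∈ S, α r x) = log (gibbsDist α S x) + log (partitionFn α S) := by
  have : Nonempty X := ⟨x⟩
  rw [gibbsDist, log_div (prod_pos fun r _ => hα r x).ne' (partitionFn_pos hα S).ne']
  ring

theorem sum_sum_mul_log (hα : ∀ r x, 0 < α r x) (s : Finset ι) (q : X → ℝ) :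
    ∑ r ∈ s, ∑ x, q x * log (α r x) = ∑ x, q x * log (∏ r ∈ s, α r x) := by
  rw [sum_comm]
  refine sum_congr rfl fun x _ => ?_
  rw [log_prod fun r _ => (hα r x).ne', mul_sum]

variable [Fintype ι] [DecidableEq ι]

theorem lowerBound_eq_sum_add_entropy [Nonempty X] (hα : ∀ r x, 0 < α r x) (S : Finset ι) :
    lowerBound α S = ∑ x, gibbsDist α S x * log (∏ r, α r x) + entropy (gibbsDist α S) := by
  have log_prod_compl (x : X) : log (∏ r ∈ Sᶜ, α r x) =
      log (∏ r, α r x) - log (gibbsDist α S x) - log (partitionFn α S) := by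
    rw [← prod_mul_prod_compl S (α · x), log_mul (prod_pos fun r _ => hα r x).ne'
      (prod_pos fun r _ => hα r x).ne', log_prod_eq hα S]
    ring
  simp only [lowerBound, entropy, sum_sum_mul_log hα, log_prod_compl, mul_sub, sum_sub_distrib,
    ← sum_mul, sum_gibbsDist hα]
  ring

theorem sum_mul_log_prod_univ_eq (hα : ∀ r x, 0 < α r x) (S : Finset ι) {q : X → ℝ}
    (hq : ∑ x, q x = 1) :
    ∑ x, q x * log (∏ r, α r x) =
      ∑ x, q x * log (gibbsDist α S x) + ∑ x, q x * log (gibbsDist α Sᶜ x)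
        + log (partitionFn α S) + log (partitionFn α Sᶜ) := by
  have log_prod_univ (x : X) : log (∏ r, α r x) = log (gibbsDist α S x)
      + log (gibbsDist α Sᶜ x) + log (partitionFn α S) + log (partitionFn α Sᶜ) := by
    rw [← prod_mul_prod_compl S (α · x), log_mul (prod_pos fun r _ => hα r x).ne'
      (prod_pos fun r _ => hα r x).ne', log_prod_eq hα, log_prod_eq hα]
    ring
  simp only [log_prod_univ, mul_add, sum_add_distrib, ← sum_mul, hq, one_mul]

theorem lowerBound_le [Nonempty X] (hα : ∀ r x, 0 < α r x) (S T : Finset ι) :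
    lowerBound α T ≤
      log (partitionFn α S) + log (partitionFn α Sᶜ) - entropy (gibbsDist α T) := by
  have gibbs (U : Finset ι) :
      ∑ x, gibbsDist α T x * log (gibbsDist α U x) ≤ -entropy (gibbsDist α T) := by
    rw [entropy, neg_neg]
    exact sum_mul_log_le_sum_mul_log (gibbsDist_pos hα T) (gibbsDist_pos hα U)
      (by rw [sum_gibbsDist hα, sum_gibbsDist hα])
  rw [lowerBound_eq_sum_add_entropy hα, sum_mul_log_prod_univ_eq hα S (sum_gibbsDist hα T)]
  linarith [gibbs S, gibbs Sᶜ]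

theorem lowerBound_add_relEntropy [Nonempty X] (hα : ∀ r x, 0 < α r x) (S : Finset ι) :
    lowerBound α S + relEntropy (gibbsDist α S) (gibbsDist α Sᶜ) =
      log (partitionFn α S) + log (partitionFn α Sᶜ) - entropy (gibbsDist α S) := by
  rw [lowerBound_eq_sum_add_entropy hα, sum_mul_log_prod_univ_eq hα S (sum_gibbsDist hα S),
    relEntropy_eq_sub (gibbsDist_pos hα S) (gibbsDist_pos hα Sᶜ), entropy]
  ring

end FactorGibbs

open FactorGibbs in
/-- Corollary 2: if `q_S` has minimum entropy (`H(q_S) ≤ H(q_T)`),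
then `ℒ_{q_T} ≤ ℒ_{q_S} + D(q_S‖q̄_S)`. -/
theorem corollary2_quality_guarantee {X : Type*} [Fintype X] [Nonempty X]
    {R : Type*} [Fintype R] [DecidableEq R] (α : R → X → ℝ) (hα : ∀ r x, 0 < α r x)
    (S T : Finset R) (ZS ZT ZSbar : ℝ) (qS qT qSbar : X → ℝ)
    (hZS : ZS = ∑ x, ∏ r ∈ S, α r x)
    (hZT : ZT = ∑ x, ∏ r ∈ T, α r x)
    (hZSbar : ZSbar = ∑ x, ∏ r ∈ Sᶜ, α r x)
    (hqS : ∀ x, qS x = (∏ r ∈ S, α r x) / ZS)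
    (hqT : ∀ x, qT x = (∏ r ∈ T, α r x) / ZT)
    (hqSbar : ∀ x, qSbar x = (∏ r ∈ Sᶜ, α r x) / ZSbar)
    (hH : (-∑ x, qS x * Real.log (qS x)) ≤ -∑ x, qT x * Real.log (qT x)) :
    Real.log ZT + ∑ r ∈ Tᶜ, ∑ x, qT x * Real.log (α r x)
      ≤ (Real.log ZS + ∑ r ∈ Sᶜ, ∑ x, qS x * Real.log (α r x))
        + ∑ x, qS x * Real.log (qS x / qSbar x) := by
  subst hZS hZT hZSbar
  obtain rfl : qS = gibbsDist α S := funext hqS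
  obtain rfl : qT = gibbsDist α T := funext hqT
  obtain rfl : qSbar = gibbsDist α Sᶜ := funext hqSbar
  calc lowerBound α T
      ≤ log (partitionFn α S) + log (partitionFn α Sᶜ) - entropy (gibbsDist α T) :=
        lowerBound_le hα S T
    _ ≤ log (partitionFn α S) + log (partitionFn α Sᶜ) - entropy (gibbsDist α S) :=
        sub_le_sub_left hH _
    _ = lowerBound α S + relEntropy (gibbsDist α S) (gibbsDist α Sᶜ) :=
        (lowerBound_add_relEntropy hα S).symm
end

section
/- Theorem 3. In the setting of Theorem 2, suppose q_S (over ℛ_S) satisfies H(q_S) ≤ H(q_B) and q_B (over ℛ_B) gives the better lower bound, ℒ_{q_S} ≤ ℒ_{q_B}. Then D(q_B‖q_S) ≤ D(q_S‖q̄_S): the best-bound distribution is within divergence D(q_S‖q̄_S) of the minimum-entropy distribution. -/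
open Finset Real

/-- Expansion of `∑ q * log (∏/W)` into per-factor sums. -/
lemma helper_expand {X : Type*} [Fintype X] {R : Type*} [Fintype R]
    (α : R → X → ℝ) (hα : ∀ r x, 0 < α r x) (T : Finset R) (W : ℝ) (hW : 0 < W)
    (q : X → ℝ) :
    ∑ x, q x * Real.log ((∏ r ∈ T, α r x) / W)
      = (∑ r ∈ T, ∑ x, q x * Real.log (α r x)) - (∑ x, q x) * Real.log W := by
  have h : ∀ x : X, Real.log ((∏ r ∈ T, α r x) / W)
      = (∑ r ∈ T, Real.log (α r x)) - Real.log W := by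
    intro x
    rw [Real.log_div (Finset.prod_pos fun r _ => hα r x).ne' hW.ne', Real.log_prod]
    intro r _; exact (hα r x).ne'
  simp_rw [h, mul_sub, Finset.mul_sum, Finset.sum_sub_distrib, Finset.sum_mul]
  rw [Finset.sum_comm]

/-- Theorem 3: if `H(q_S) ≤ H(q_B)` and `q_B` gives the better
lower bound (`ℒ_{q_S} ≤ ℒ_{q_B}`), then `D(q_B‖q_S) ≤ D(q_S‖q̄_S)`. -/
theorem theorem3_best_close_to_min_entropy {X : Type*} [Fintype X] [Nonempty X]
    {R : Type*} [Fintype R] [DecidableEq R] (α : R → X → ℝ) (hα : ∀ r x, 0 < α r x)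
    (S B : Finset R) (ZS ZB ZSbar : ℝ) (qS qB qSbar : X → ℝ)
    (hZS : ZS = ∑ x, ∏ r ∈ S, α r x)
    (hZB : ZB = ∑ x, ∏ r ∈ B, α r x)
    (hZSbar : ZSbar = ∑ x, ∏ r ∈ Sᶜ, α r x)
    (hqS : ∀ x, qS x = (∏ r ∈ S, α r x) / ZS)
    (hqB : ∀ x, qB x = (∏ r ∈ B, α r x) / ZB)
    (hqSbar : ∀ x, qSbar x = (∏ r ∈ Sᶜ, α r x) / ZSbar)
    (hH : (-∑ x, qS x * Real.log (qS x)) ≤ -∑ x, qB x * Real.log (qB x))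
    (hBbest : Real.log ZS + ∑ r ∈ Sᶜ, ∑ x, qS x * Real.log (α r x)
      ≤ Real.log ZB + ∑ r ∈ Bᶜ, ∑ x, qB x * Real.log (α r x)) :
    (∑ x, qB x * Real.log (qB x / qS x)) ≤ ∑ x, qS x * Real.log (qS x / qSbar x) := by
  have hZS0 : 0 < ZS := by
    rw [hZS]; exact Finset.sum_pos (fun x _ => Finset.prod_pos fun r _ => hα r x) Finset.univ_nonempty
  have hZB0 : 0 < ZB := by
    rw [hZB]; exact Finset.sum_pos (fun x _ => Finset.prod_pos fun r _ => hα r x) Finset.univ_nonempty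
  have hZSbar0 : 0 < ZSbar := by
    rw [hZSbar]; exact Finset.sum_pos (fun x _ => Finset.prod_pos fun r _ => hα r x) Finset.univ_nonempty
  have hqS0 : ∀ x, 0 < qS x := fun x => by rw [hqS]; exact div_pos (Finset.prod_pos fun r _ => hα r x) hZS0
  have hqB0 : ∀ x, 0 < qB x := fun x => by rw [hqB]; exact div_pos (Finset.prod_pos fun r _ => hα r x) hZB0
  have hqSbar0 : ∀ x, 0 < qSbar x := fun x => by rw [hqSbar]; exact div_pos (Finset.prod_pos fun r _ => hα r x) hZSbar0
  have hsumS : (∑ x, qS x) = 1 := by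
    simp_rw [hqS]; rw [← Finset.sum_div, ← hZS, div_self hZS0.ne']
  have hsumB : (∑ x, qB x) = 1 := by
    simp_rw [hqB]; rw [← Finset.sum_div, ← hZB, div_self hZB0.ne']
  have hsumSbar : (∑ x, qSbar x) = 1 := by
    simp_rw [hqSbar]; rw [← Finset.sum_div, ← hZSbar, div_self hZSbar0.ne']
  -- Expansion facts
  have F1 : (∑ x, qS x * Real.log (qS x))
      = (∑ r ∈ S, ∑ x, qS x * Real.log (α r x)) - Real.log ZS := by
    have := helper_expand α hα S ZS hZS0 qS
    simp_rw [← hqS] at this; rw [this, hsumS, one_mul]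
  have F2 : (∑ x, qB x * Real.log (qB x))
      = (∑ r ∈ B, ∑ x, qB x * Real.log (α r x)) - Real.log ZB := by
    have := helper_expand α hα B ZB hZB0 qB
    simp_rw [← hqB] at this; rw [this, hsumB, one_mul]
  have F3 : (∑ x, qB x * Real.log (qS x))
      = (∑ r ∈ S, ∑ x, qB x * Real.log (α r x)) - Real.log ZS := by
    have := helper_expand α hα S ZS hZS0 qB
    simp_rw [← hqS] at this; rw [this, hsumB, one_mul]
  have F4 : (∑ x, qS x * Real.log (qSbar x))
      = (∑ r ∈ Sᶜ, ∑ x, qS x * Real.log (α r x)) - Real.log ZSbar := by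
    have := helper_expand α hα Sᶜ ZSbar hZSbar0 qS
    simp_rw [← hqSbar] at this; rw [this, hsumS, one_mul]
  have F5 : (∑ x, qB x * Real.log (qSbar x))
      = (∑ r ∈ Sᶜ, ∑ x, qB x * Real.log (α r x)) - Real.log ZSbar := by
    have := helper_expand α hα Sᶜ ZSbar hZSbar0 qB
    simp_rw [← hqSbar] at this; rw [this, hsumB, one_mul]
  -- Gibbs' inequality: ∑ qB log qSbar ≤ ∑ qB log qB
  have hGibbs : (∑ x, qB x * Real.log (qSbar x)) ≤ ∑ x, qB x * Real.log (qB x) := by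
    have h1 : ∀ x : X, qB x * Real.log (qSbar x) - qB x * Real.log (qB x)
        ≤ qSbar x - qB x := by
      intro x
      have hlog : Real.log (qSbar x / qB x) ≤ qSbar x / qB x - 1 :=
        Real.log_le_sub_one_of_pos (div_pos (hqSbar0 x) (hqB0 x))
      have := mul_le_mul_of_nonneg_left hlog (hqB0 x).le
      rw [Real.log_div (hqSbar0 x).ne' (hqB0 x).ne', mul_sub] at this
      calc qB x * Real.log (qSbar x) - qB x * Real.log (qB x)
          ≤ qB x * (qSbar x / qB x - 1) := this
        _ = qSbar x - qB x := by rw [mul_sub, mul_div_cancel₀ _ (hqB0 x).ne', mul_one]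
    have h2 : (∑ x, (qB x * Real.log (qSbar x) - qB x * Real.log (qB x)))
        ≤ ∑ x, (qSbar x - qB x) := Finset.sum_le_sum fun x _ => h1 x
    rw [Finset.sum_sub_distrib, Finset.sum_sub_distrib, hsumSbar, hsumB] at h2
    linarith
  -- Split of sums over S, Sᶜ, B, Bᶜ
  have hsplit : (∑ r ∈ S, ∑ x, qB x * Real.log (α r x))
        + (∑ r ∈ Sᶜ, ∑ x, qB x * Real.log (α r x))
      = (∑ r ∈ B, ∑ x, qB x * Real.log (α r x))
        + (∑ r ∈ Bᶜ, ∑ x, qB x * Real.log (α r x)) := by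
    rw [Finset.sum_add_sum_compl, Finset.sum_add_sum_compl]
  -- Rewrite the goal with log of quotients
  have hL : (∑ x, qB x * Real.log (qB x / qS x))
      = (∑ x, qB x * Real.log (qB x)) - ∑ x, qB x * Real.log (qS x) := by
    simp_rw [fun x => Real.log_div (hqB0 x).ne' (hqS0 x).ne', mul_sub]
    rw [Finset.sum_sub_distrib]
  have hR : (∑ x, qS x * Real.log (qS x / qSbar x))
      = (∑ x, qS x * Real.log (qS x)) - ∑ x, qS x * Real.log (qSbar x) := by
    simp_rw [fun x => Real.log_div (hqS0 x).ne' (hqSbar0 x).ne', mul_sub]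
    rw [Finset.sum_sub_distrib]
  rw [hL, hR]
  linarith [F1, F2, F3, F4, F5, hGibbs, hsplit, hH, hBbest]
end

section
/- Let q1, q2, q̄1 be strictly positive probability distributions on a finite set X with p = c·q1·q̄1 a probability distribution. If H(q1) ≤ H(q2) then D(q2‖p) ≥ D(q1‖p) − D(q1‖q̄1) + D(q2‖q1) + D(q2‖q̄1) ≥ D(q1‖p) − D(q1‖q̄1) + D(q2‖q1). -/
open Finset Real

/-- divergence form of Theorem 2's first bound: if `H(q1) ≤ H(q2)`
then `D(q2‖p) ≥ D(q1‖p) − D(q1‖q̄1) + D(q2‖q1) + D(q2‖q̄1)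
              ≥ D(q1‖p) − D(q1‖q̄1) + D(q2‖q1)`. -/
theorem divergence_chain {X : Type*} [Fintype X] [Nonempty X]
    (q1 q2 q1bar p : X → ℝ) (c : ℝ) (hc : 0 < c)
    (hq1 : ∀ x, 0 < q1 x) (hq2 : ∀ x, 0 < q2 x) (hq1bar : ∀ x, 0 < q1bar x)
    (hq1s : ∑ x, q1 x = 1) (hq2s : ∑ x, q2 x = 1) (hq1bars : ∑ x, q1bar x = 1)
    (hp : ∀ x, p x = c * q1 x * q1bar x) (hps : ∑ x, p x = 1)
    (hH : (-∑ x, q1 x * Real.log (q1 x)) ≤ -∑ x, q2 x * Real.log (q2 x)) :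
    ((∑ x, q1 x * Real.log (q1 x / p x)) - (∑ x, q1 x * Real.log (q1 x / q1bar x))
        + (∑ x, q2 x * Real.log (q2 x / q1 x))
        + (∑ x, q2 x * Real.log (q2 x / q1bar x)))
      ≤ ∑ x, q2 x * Real.log (q2 x / p x)
    ∧ ((∑ x, q1 x * Real.log (q1 x / p x)) - (∑ x, q1 x * Real.log (q1 x / q1bar x))
        + (∑ x, q2 x * Real.log (q2 x / q1 x)))
      ≤ (∑ x, q1 x * Real.log (q1 x / p x)) - (∑ x, q1 x * Real.log (q1 x / q1bar x))
        + (∑ x, q2 x * Real.log (q2 x / q1 x))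
        + (∑ x, q2 x * Real.log (q2 x / q1bar x)) := by

  -- pointwise identity for q2 terms
  have h1 : ∀ x, q2 x * Real.log (q2 x / p x)
      = q2 x * Real.log (q2 x / q1 x) + q2 x * Real.log (q2 x / q1bar x)
        + (-(q2 x * Real.log (q2 x)) - q2 x * Real.log c) := by
    intro x
    have a1 := hq1 x; have a2 := hq2 x; have a3 := hq1bar x
    rw [hp x, Real.log_div (by positivity) (by positivity),
        Real.log_div (by positivity) (by positivity),
        Real.log_div (by positivity) (by positivity),
        Real.log_mul (by positivity) (by positivity),
        Real.log_mul (by positivity) (by positivity)]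
    ring
  have h2 : ∀ x, q1 x * Real.log (q1 x / p x) - q1 x * Real.log (q1 x / q1bar x)
      = -(q1 x * Real.log (q1 x)) - q1 x * Real.log c := by
    intro x
    have a1 := hq1 x; have a3 := hq1bar x
    rw [hp x, Real.log_div (by positivity) (by positivity),
        Real.log_div (by positivity) (by positivity),
        Real.log_mul (by positivity) (by positivity),
        Real.log_mul (by positivity) (by positivity)]
    ring
  have s1 : ∑ x, q2 x * Real.log (q2 x / p x)
      = (∑ x, q2 x * Real.log (q2 x / q1 x)) + (∑ x, q2 x * Real.log (q2 x / q1bar x))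
        + (-(∑ x, q2 x * Real.log (q2 x)) - Real.log c) := by
    rw [Finset.sum_congr rfl (fun x _ => h1 x)]
    rw [Finset.sum_add_distrib, Finset.sum_add_distrib, Finset.sum_sub_distrib,
        Finset.sum_neg_distrib, ← Finset.sum_mul, hq2s, one_mul]
  have s2 : (∑ x, q1 x * Real.log (q1 x / p x)) - (∑ x, q1 x * Real.log (q1 x / q1bar x))
      = -(∑ x, q1 x * Real.log (q1 x)) - Real.log c := by
    rw [← Finset.sum_sub_distrib, Finset.sum_congr rfl (fun x _ => h2 x),
        Finset.sum_sub_distrib, Finset.sum_neg_distrib, ← Finset.sum_mul, hq1s, one_mul]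
  have kl : 0 ≤ ∑ x, q2 x * Real.log (q2 x / q1bar x) := by
    have hterm : ∀ x ∈ Finset.univ, q2 x - q1bar x ≤ q2 x * Real.log (q2 x / q1bar x) := by
      intro x _
      have a2 := hq2 x; have a3 := hq1bar x
      have hlog : Real.log (q1bar x / q2 x) ≤ q1bar x / q2 x - 1 :=
        Real.log_le_sub_one_of_pos (by positivity)
      have heq : Real.log (q2 x / q1bar x) = - Real.log (q1bar x / q2 x) := by
        rw [← Real.log_inv, inv_div]
      rw [heq]
      have h3 : 1 - q1bar x / q2 x ≤ - Real.log (q1bar x / q2 x) := by linarith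
      have := mul_le_mul_of_nonneg_left h3 (le_of_lt a2)
      calc q2 x - q1bar x = q2 x * (1 - q1bar x / q2 x) := by field_simp
        _ ≤ q2 x * (- Real.log (q1bar x / q2 x)) := this
        _ = _ := by ring
    have := Finset.sum_le_sum hterm
    rw [Finset.sum_sub_distrib, hq2s, hq1bars] at this
    linarith
  constructor
  · rw [s1]; linarith
  · linarith
end
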